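/- If U and Ũ are distinct n-qubit Clifford unitaries (distinct as maps on density matrices, i.e., U†Ũ is not a scalar multiple of the identity), then the entanglement fidelity satisfies |Tr(U†Ũ)/2^n|² ≤ 1/2. -/

import Mathlib

open Matrix

/-- The single-qubit Pauli matrices I, X, Y, Z. -/
noncomputable def pauli : Fin 4 → Matrix (Fin 2) (Fin 2) ℂ
  | 0 => 1
  | 1 => !![0, 1; 1, 0]
  | 2 => !![0, -Complex.I; Complex.I, 0]
  | 3 => !![1, 0; 0, -1]

/-- Klein-group multiplication table of Pauli labels. -/
def pMul : Fin 4 → Fin 4 → Fin 4 := ![![0,1,2,3],![1,0,3,2],![2,3,0,1],![3,2,1,0]]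

/-- Phase table: `pauli a * pauli b = pPh a b • pauli (pMul a b)`. -/
noncomputable def pPh : Fin 4 → Fin 4 → ℂ :=
  ![![1,1,1,1],![1,1,Complex.I,-Complex.I],![1,-Complex.I,1,Complex.I],![1,Complex.I,-Complex.I,1]]

lemma pauli_mul (a b : Fin 4) : pauli a * pauli b = pPh a b • pauli (pMul a b) := by
  fin_cases a <;> fin_cases b <;>
    ext i j <;> fin_cases i <;> fin_cases j <;>
      simp [pauli, pMul, pPh, mul_apply, Fin.sum_univ_two, Matrix.vecHead, Matrix.vecTail, Complex.ext_iff]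

lemma pPh_abs (a b : Fin 4) : ‖pPh a b‖ = 1 := by
  fin_cases a <;> fin_cases b <;> simp [pPh, Matrix.vecHead, Matrix.vecTail]

lemma pPh_ne_zero (a b : Fin 4) : pPh a b ≠ 0 := by
  intro h; have := pPh_abs a b; rw [h] at this; simp at this

lemma pMul_self (a : Fin 4) : pMul a a = 0 := by fin_cases a <;> rfl

lemma pPh_self (a : Fin 4) : pPh a a = 1 := by fin_cases a <;> rfl

lemma pMul_eq_zero_iff (a b : Fin 4) : pMul a b = 0 ↔ a = b := by
  fin_cases a <;> fin_cases b <;> simp [pMul, Matrix.vecHead, Matrix.vecTail] <;> decide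

lemma pMul_comm (a b : Fin 4) : pMul a b = pMul b a := by fin_cases a <;> fin_cases b <;> rfl

/-- partner label anticommuting with a nonzero label -/
def pPartner : Fin 4 → Fin 4 := ![0, 3, 1, 1]

lemma pPartner_ne_zero (a : Fin 4) (h : a ≠ 0) : pPartner a ≠ 0 := by
  fin_cases a <;> simp_all [pPartner] <;> decide

lemma pPh_partner (a : Fin 4) (h : a ≠ 0) : pPh (pPartner a) a = - pPh a (pPartner a) := by
  fin_cases a <;> simp_all [pPartner, pPh, Matrix.vecHead, Matrix.vecTail]

lemma pauli_conj (a : Fin 4) (i j : Fin 2) :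
    (starRingEnd ℂ) (pauli a j i) = pauli a i j := by
  fin_cases a <;> fin_cases i <;> fin_cases j <;>
    simp [pauli, Matrix.vecHead, Matrix.vecTail, Complex.ext_iff]

lemma pauli_diag_sum (a : Fin 4) : (∑ x : Fin 2, pauli a x x) = if a = 0 then 2 else 0 := by
  fin_cases a <;> simp [pauli, Fin.sum_univ_two, Matrix.vecHead, Matrix.vecTail] <;> decide

/-- The n-qubit Pauli matrix given by a choice of single-qubit Pauli on each qubit. -/
noncomputable def nPauli {n : ℕ} (f : Fin n → Fin 4) :
    Matrix (Fin n → Fin 2) (Fin n → Fin 2) ℂ :=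
  fun i j => ∏ k, pauli (f k) (i k) (j k)

lemma nPauli_zero {n : ℕ} : nPauli (fun _ : Fin n => (0 : Fin 4)) = 1 := by
  ext i j
  simp only [nPauli, pauli, Matrix.one_apply]
  by_cases h : i = j
  · subst h; simp
  · rw [if_neg h]
    obtain ⟨k, hk⟩ : ∃ k, i k ≠ j k := by
      by_contra hc; push_neg at hc; exact h (funext hc)
    apply Finset.prod_eq_zero (Finset.mem_univ k)
    simp [Matrix.one_apply, hk]

lemma nPauli_conjTranspose {n : ℕ} (f : Fin n → Fin 4) : (nPauli f)ᴴ = nPauli f := by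
  ext i j
  simp only [conjTranspose_apply, nPauli, RCLike.star_def, map_prod]
  exact Finset.prod_congr rfl fun k _ => pauli_conj _ _ _

lemma nPauli_mul {n : ℕ} (f g : Fin n → Fin 4) :
    nPauli f * nPauli g = (∏ k, pPh (f k) (g k)) • nPauli (fun k => pMul (f k) (g k)) := by
  ext i j
  simp only [mul_apply, nPauli, Matrix.smul_apply, smul_eq_mul]
  have h1 : ∀ m : Fin n → Fin 2,
      (∏ k, pauli (f k) (i k) (m k)) * ∏ k, pauli (g k) (m k) (j k)
      = ∏ k, pauli (f k) (i k) (m k) * pauli (g k) (m k) (j k) :=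
    fun m => (Finset.prod_mul_distrib).symm
  calc (∑ m : Fin n → Fin 2, (∏ k, pauli (f k) (i k) (m k)) * ∏ k, pauli (g k) (m k) (j k))
      = ∑ m : Fin n → Fin 2, ∏ k, pauli (f k) (i k) (m k) * pauli (g k) (m k) (j k) := by
        exact Finset.sum_congr rfl fun m _ => h1 m
    _ = ∏ k, ∑ x : Fin 2, pauli (f k) (i k) x * pauli (g k) x (j k) :=
        (Fintype.prod_sum fun k x => pauli (f k) (i k) x * pauli (g k) x (j k)).symm
    _ = ∏ k, (pPh (f k) (g k) * pauli (pMul (f k) (g k)) (i k) (j k)) := by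
        refine Finset.prod_congr rfl fun k _ => ?_
        have := congrFun (congrFun (pauli_mul (f k) (g k)) (i k)) (j k)
        simpa [mul_apply, Fin.sum_univ_two, smul_eq_mul] using this
    _ = _ := Finset.prod_mul_distrib

lemma nPauli_mul_self {n : ℕ} (f : Fin n → Fin 4) : nPauli f * nPauli f = 1 := by
  rw [nPauli_mul]
  simp [pPh_self, pMul_self, nPauli_zero]

lemma nPauli_trace {n : ℕ} (f : Fin n → Fin 4) :
    (nPauli f).trace = if f = (fun _ => 0) then (2 : ℂ) ^ n else 0 := by
  have : (nPauli f).trace = ∏ k, ∑ x : Fin 2, pauli (f k) x x := by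
    simp only [trace, diag, nPauli]
    exact (Fintype.prod_sum fun k x => pauli (f k) x x).symm
  rw [this]
  by_cases h : f = fun _ => 0
  · subst h; simp [pauli_diag_sum]
    norm_num [pauli]
  · rw [if_neg h]
    obtain ⟨k, hk⟩ : ∃ k, f k ≠ 0 := by
      by_contra hc; push_neg at hc; exact h (funext hc)
    refine Finset.prod_eq_zero (Finset.mem_univ k) ?_
    rw [pauli_diag_sum, if_neg hk]

lemma nPauli_orth {n : ℕ} (f g : Fin n → Fin 4) :
    ((nPauli f)ᴴ * nPauli g).trace = if f = g then (2 : ℂ) ^ n else 0 := by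
  rw [nPauli_conjTranspose, nPauli_mul, trace_smul, nPauli_trace, smul_eq_mul]
  by_cases h : f = g
  · subst h
    simp [pMul_self, pPh_self]
  · have : (fun k => pMul (f k) (g k)) ≠ (fun _ => (0:Fin 4)) := by
      intro hc
      exact h (funext fun k => (pMul_eq_zero_iff (f k) (g k)).mp (congrFun hc k))
    simp [h, this]

/-- A Clifford unitary: a unitary mapping every n-qubit Pauli to an n-qubit Pauli
times ±1 under conjugation. -/
def IsClifford {n : ℕ} (U : Matrix (Fin n → Fin 2) (Fin n → Fin 2) ℂ) : Prop :=
  U ∈ Matrix.unitaryGroup (Fin n → Fin 2) ℂ ∧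
    ∀ f : Fin n → Fin 4, ∃ g : Fin n → Fin 4, ∃ s : ℂ,
      (s = 1 ∨ s = -1) ∧ U * nPauli f * Uᴴ = s • nPauli g

lemma two_pow_ne (n : ℕ) : (2 : ℂ) ^ n ≠ 0 := pow_ne_zero n two_ne_zero

lemma pSign_mul_self {s : ℂ} (hs : s = 1 ∨ s = -1) : s * s = 1 := by
  rcases hs with h | h <;> simp [h]

lemma nPauli_eq_of_smul {n : ℕ} {f g : Fin n → Fin 4} {s : ℂ} (hs : s = 1 ∨ s = -1)
    (h : nPauli f = s • nPauli g) : f = g := by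
  by_contra hfg
  have h1 : ((nPauli f)ᴴ * nPauli f).trace = (2:ℂ) ^ n := by simp [nPauli_orth]
  have h2 : ((nPauli f)ᴴ * (s • nPauli g)).trace = 0 := by
    rw [Matrix.mul_smul, trace_smul, nPauli_orth, if_neg hfg, smul_zero]
  rw [← h, h1] at h2
  exact two_pow_ne n h2

lemma IsClifford.adj {n : ℕ} {U : Matrix (Fin n → Fin 2) (Fin n → Fin 2) ℂ}
    (h : IsClifford U) : IsClifford Uᴴ := by
  obtain ⟨hU, hP⟩ := h
  have hUU : Uᴴ * U = 1 := by
    have := Matrix.mem_unitaryGroup_iff'.mp hU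
    simpa [Matrix.star_eq_conjTranspose] using this
  have hUU' : U * Uᴴ = 1 := by
    have := Matrix.mem_unitaryGroup_iff.mp hU
    simpa [Matrix.star_eq_conjTranspose] using this
  have hcanc : ∀ M : Matrix (Fin n → Fin 2) (Fin n → Fin 2) ℂ,
      Uᴴ * (U * M * Uᴴ) * U = M := by
    intro M
    calc Uᴴ * (U * M * Uᴴ) * U = (Uᴴ * U) * M * (Uᴴ * U) := by simp only [Matrix.mul_assoc]
      _ = M := by rw [hUU]; simp
  choose G S hS hEq using hP
  have hinj : Function.Injective G := by
    intro f₁ f₂ hg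
    have e2 : nPauli (G f₂) = S f₂ • (U * nPauli f₂ * Uᴴ) := by
      rw [hEq f₂, smul_smul, pSign_mul_self (hS f₂), one_smul]
    have e3 : U * nPauli f₁ * Uᴴ = (S f₁ * S f₂) • (U * nPauli f₂ * Uᴴ) := by
      rw [hEq f₁, hg, e2, smul_smul]
    have e4 : nPauli f₁ = (S f₁ * S f₂) • nPauli f₂ := by
      have h5 := congrArg (fun M => Uᴴ * M * U) e3
      simp only [Matrix.mul_smul, Matrix.smul_mul] at h5
      rwa [hcanc, hcanc] at h5
    have hsgn : S f₁ * S f₂ = 1 ∨ S f₁ * S f₂ = -1 := by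
      rcases hS f₁ with h1 | h1 <;> rcases hS f₂ with h2 | h2 <;> simp [h1, h2]
    exact nPauli_eq_of_smul hsgn e4
  have hsurj : Function.Surjective G := Finite.surjective_of_injective hinj
  refine ⟨?_, ?_⟩
  · have := Unitary.star_mem hU
    simpa [Matrix.star_eq_conjTranspose] using this
  · intro g
    obtain ⟨f, rfl⟩ := hsurj g
    refine ⟨f, S f, hS f, ?_⟩
    have e2 : nPauli (G f) = S f • (U * nPauli f * Uᴴ) := by
      rw [hEq f, smul_smul, pSign_mul_self (hS f), one_smul]
    rw [conjTranspose_conjTranspose, e2]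
    rw [Matrix.mul_smul, Matrix.smul_mul, hcanc]

lemma IsClifford.mul {n : ℕ} {A B : Matrix (Fin n → Fin 2) (Fin n → Fin 2) ℂ}
    (hA : IsClifford A) (hB : IsClifford B) : IsClifford (A * B) := by
  obtain ⟨hAu, hAp⟩ := hA
  obtain ⟨hBu, hBp⟩ := hB
  refine ⟨mul_mem hAu hBu, fun f => ?_⟩
  obtain ⟨g, s, hs, hgs⟩ := hBp f
  obtain ⟨h, t, ht, hht⟩ := hAp g
  refine ⟨h, s * t, ?_, ?_⟩
  · rcases hs with h1 | h1 <;> rcases ht with h2 | h2 <;> simp [h1, h2]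
  · rw [conjTranspose_mul]
    calc A * B * nPauli f * (Bᴴ * Aᴴ) = A * (B * nPauli f * Bᴴ) * Aᴴ := by
          simp only [Matrix.mul_assoc]
      _ = s • (A * nPauli g * Aᴴ) := by
          rw [hgs]; simp only [Matrix.mul_smul, Matrix.smul_mul]
      _ = (s * t) • nPauli h := by rw [hht, smul_smul]

/-- Embedding of matrices into Euclidean space for Bessel's inequality. -/
noncomputable def matE {n : ℕ} (M : Matrix (Fin n → Fin 2) (Fin n → Fin 2) ℂ) :
    EuclideanSpace ℂ ((Fin n → Fin 2) × (Fin n → Fin 2)) :=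
  WithLp.toLp 2 (fun p : (Fin n → Fin 2) × (Fin n → Fin 2) => M p.1 p.2)

lemma matE_inner {n : ℕ} (X Y : Matrix (Fin n → Fin 2) (Fin n → Fin 2) ℂ) :
    @inner ℂ _ _ (matE X) (matE Y) = (Xᴴ * Y).trace := by
  simp only [trace, diag, mul_apply, conjTranspose_apply]
  rw [PiLp.inner_apply]
  rw [Fintype.sum_prod_type]
  rw [Finset.sum_comm]
  refine Finset.sum_congr rfl fun j _ => Finset.sum_congr rfl fun i _ => ?_
  simp [matE, mul_comm, RCLike.inner_apply]

lemma bessel_two {n : ℕ} (A B V : Matrix (Fin n → Fin 2) (Fin n → Fin 2) ℂ)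
    (hA : (Aᴴ * A).trace = (2:ℂ) ^ n) (hB : (Bᴴ * B).trace = (2:ℂ) ^ n)
    (hAB : (Aᴴ * B).trace = 0) (hV : (Vᴴ * V).trace = (2:ℂ) ^ n) :
    ‖(Aᴴ * V).trace‖ ^ 2 + ‖(Bᴴ * V).trace‖ ^ 2
      ≤ (2:ℝ) ^ n * (2:ℝ) ^ n := by
  set r : ℝ := Real.sqrt (2 ^ n) with hr
  have hrpos : 0 < r := Real.sqrt_pos.mpr (by positivity)
  have hr2 : (r : ℂ) * (r : ℂ) = (2:ℂ) ^ n := by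
    rw [← Complex.ofReal_mul, Real.mul_self_sqrt (by positivity)]
    norm_num
  have hrne : (r : ℂ) ≠ 0 := by exact_mod_cast hrpos.ne'
  set w : Fin 2 → EuclideanSpace ℂ ((Fin n → Fin 2) × (Fin n → Fin 2)) :=
    ![(r : ℂ)⁻¹ • matE A, (r : ℂ)⁻¹ • matE B] with hw
  have hinner : ∀ X Y : Matrix (Fin n → Fin 2) (Fin n → Fin 2) ℂ,
      @inner ℂ _ _ ((r:ℂ)⁻¹ • matE X) (matE Y) = (r:ℂ)⁻¹ * (Xᴴ * Y).trace := by
    intro X Y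
    rw [inner_smul_left, matE_inner]
    simp [Complex.conj_ofReal]
  have hBA : (Bᴴ * A).trace = 0 := by
    have : ((Aᴴ * B)ᴴ).trace = star ((Aᴴ * B).trace) := Matrix.trace_conjTranspose _
    rw [conjTranspose_mul, conjTranspose_conjTranspose, hAB] at this
    simpa using this
  have hww : ∀ X Y : Matrix (Fin n → Fin 2) (Fin n → Fin 2) ℂ,
      @inner ℂ _ _ ((r:ℂ)⁻¹ • matE X) ((r:ℂ)⁻¹ • matE Y)
        = ((r:ℂ) * (r:ℂ))⁻¹ * (Xᴴ * Y).trace := by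
    intro X Y
    rw [inner_smul_right, inner_smul_left, matE_inner, map_inv₀, Complex.conj_ofReal, mul_inv]
    ring
  have horth : Orthonormal ℂ w := by
    rw [orthonormal_iff_ite]
    intro i j
    fin_cases i <;> fin_cases j <;>
      simp only [hw, Matrix.cons_val_zero, Matrix.cons_val_one, Matrix.head_cons,
        Fin.mk_zero, Fin.mk_one] <;>
      rw [hww] <;> simp [hA, hB, hAB, hBA, hr2, inv_mul_cancel₀ (two_pow_ne n)]
  have hbes := horth.sum_inner_products_le (s := Finset.univ) (matE V)
  have hnorm : ‖matE V‖ ^ 2 = (2:ℝ) ^ n := by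
    have h2 : RCLike.re (@inner ℂ _ _ (matE V) (matE V)) = ‖matE V‖ ^ 2 :=
      inner_self_eq_norm_sq (𝕜 := ℂ) _
    rw [← h2, matE_inner, hV]
    rw [show ((2:ℂ)) = ((2:ℝ):ℂ) by norm_num, ← Complex.ofReal_pow]
    exact Complex.ofReal_re _
  have hterm : ∀ X : Matrix (Fin n → Fin 2) (Fin n → Fin 2) ℂ,
      ‖@inner ℂ _ _ ((r:ℂ)⁻¹ • matE X) (matE V)‖ ^ 2
        = ((2:ℝ) ^ n)⁻¹ * ‖(Xᴴ * V).trace‖ ^ 2 := by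
    intro X
    rw [hinner, norm_mul, mul_pow]
    congr 1
    rw [norm_inv, Complex.norm_real, Real.norm_eq_abs, abs_of_pos hrpos]
    rw [inv_pow, hr, Real.sq_sqrt (by positivity)]
  rw [Fin.sum_univ_two] at hbes
  simp only [hw, Matrix.cons_val_zero, Matrix.cons_val_one, Matrix.head_cons] at hbes
  rw [hterm A, hterm B, hnorm] at hbes
  have hpos : (0:ℝ) < (2:ℝ) ^ n := by positivity
  rw [← mul_add] at hbes
  calc ‖(Aᴴ * V).trace‖ ^ 2 + ‖(Bᴴ * V).trace‖ ^ 2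
      = (2:ℝ) ^ n * (((2:ℝ) ^ n)⁻¹ * (‖(Aᴴ * V).trace‖ ^ 2
          + ‖(Bᴴ * V).trace‖ ^ 2)) := by
        field_simp
    _ ≤ (2:ℝ) ^ n * (2:ℝ) ^ n := by
        exact mul_le_mul_of_nonneg_left hbes (le_of_lt hpos)

lemma trace_nPauli_sum {n : ℕ} (c : (Fin n → Fin 4) → ℂ) (g : Fin n → Fin 4) :
    ((nPauli g)ᴴ * (∑ f, c f • nPauli f)).trace = c g * 2 ^ n := by
  rw [Finset.mul_sum, trace_sum]
  have h1 : ∀ f : Fin n → Fin 4, ((nPauli g)ᴴ * (c f • nPauli f)).trace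
      = if f = g then c g * 2 ^ n else 0 := by
    intro f
    rw [Matrix.mul_smul, trace_smul, nPauli_orth, smul_eq_mul]
    by_cases h : f = g
    · subst h; simp
    · simp [h, Ne.symm h]
  calc (∑ f, ((nPauli g)ᴴ * (c f • nPauli f)).trace)
      = ∑ f, if f = g then c g * 2 ^ n else 0 := Finset.sum_congr rfl fun f _ => h1 f
    _ = c g * 2 ^ n := by rw [Finset.sum_ite_eq' Finset.univ g]; simp

lemma nPauli_linearIndependent {n : ℕ} :
    LinearIndependent ℂ (nPauli (n := n)) := by
  rw [Fintype.linearIndependent_iff]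
  intro c hc g
  have h1 := congrArg (fun M => ((nPauli g)ᴴ * M).trace) hc
  rw [trace_nPauli_sum c g] at h1
  simp only [Matrix.mul_zero, trace_zero] at h1
  exact (mul_eq_zero.mp h1).resolve_right (two_pow_ne n)

lemma nPauli_span_top {n : ℕ} :
    Submodule.span ℂ (Set.range (nPauli (n := n))) = ⊤ := by
  apply LinearIndependent.span_eq_top_of_card_eq_finrank' nPauli_linearIndependent
  rw [Module.finrank_matrix]
  simp only [Fintype.card_fun, Fintype.card_fin]
  rw [← Nat.mul_pow]
  norm_num

lemma exists_coeffs {n : ℕ} (V : Matrix (Fin n → Fin 2) (Fin n → Fin 2) ℂ) :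
    ∃ c : (Fin n → Fin 4) → ℂ, ∑ f, c f • nPauli f = V := by
  have : V ∈ Submodule.span ℂ (Set.range (nPauli (n := n))) := by
    rw [nPauli_span_top]; trivial
  rwa [Submodule.mem_span_range_iff_exists_fun] at this

lemma pPh_zero_left (a : Fin 4) : pPh 0 a = 1 := by
  fin_cases a <;> rfl

lemma pPh_zero_right (a : Fin 4) : pPh a 0 = 1 := by
  fin_cases a <;> rfl

lemma scalar_of_commutes {n : ℕ} {V : Matrix (Fin n → Fin 2) (Fin n → Fin 2) ℂ}
    (hcomm : ∀ f, V * nPauli f = nPauli f * V) : ∃ c : ℂ, V = c • 1 := by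
  have htr : ∀ f : Fin n → Fin 4, f ≠ (fun _ => 0) → (nPauli f * V).trace = 0 := by
    intro f hf
    obtain ⟨k, hk⟩ : ∃ k, f k ≠ 0 := by
      by_contra hc; push_neg at hc; exact hf (funext hc)
    set q : Fin n → Fin 4 := fun j => if j = k then pPartner (f k) else 0 with hq
    have hqk : q k = pPartner (f k) := by simp [hq]
    have hph1 : (∏ j, pPh (q j) (f j)) = pPh (pPartner (f k)) (f k) := by
      rw [Finset.prod_eq_single k]
      · rw [hqk]
      · intro j _ hj; simp [hq, hj, pPh_zero_left]
      · simp
    have hph2 : (∏ j, pPh (f j) (q j)) = pPh (f k) (pPartner (f k)) := by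
      rw [Finset.prod_eq_single k]
      · rw [hqk]
      · intro j _ hj; simp [hq, hj, pPh_zero_right]
      · simp
    have hanti : nPauli q * nPauli f = -(nPauli f * nPauli q) := by
      rw [nPauli_mul, nPauli_mul, hph1, hph2]
      have hm : (fun j => pMul (q j) (f j)) = fun j => pMul (f j) (q j) :=
        funext fun j => pMul_comm _ _
      rw [hm, pPh_partner (f k) hk, neg_smul]
    have hTa : (nPauli q * nPauli f * V * nPauli q).trace = (nPauli f * V).trace := by
      rw [trace_mul_comm]
      calc (nPauli q * (nPauli q * nPauli f * V)).trace
          = ((nPauli q * nPauli q) * (nPauli f * V)).trace := by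
            simp only [Matrix.mul_assoc]
        _ = (nPauli f * V).trace := by rw [nPauli_mul_self]; simp
    have hTb : (nPauli q * nPauli f * V * nPauli q).trace = -(nPauli f * V).trace := by
      rw [hanti]
      simp only [Matrix.neg_mul, trace_neg, neg_inj]
      calc (nPauli f * nPauli q * V * nPauli q).trace
          = (nPauli f * (nPauli q * V) * nPauli q).trace := by simp only [Matrix.mul_assoc]
        _ = (nPauli f * (V * nPauli q) * nPauli q).trace := by rw [hcomm q]
        _ = (nPauli f * V * (nPauli q * nPauli q)).trace := by simp only [Matrix.mul_assoc]
        _ = (nPauli f * V).trace := by rw [nPauli_mul_self]; simp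
    have := hTa.symm.trans hTb
    linear_combination (norm := ring_nf) this / 2
  obtain ⟨c, hc⟩ := exists_coeffs V
  refine ⟨c (fun _ => 0), ?_⟩
  have hzero : ∀ g : Fin n → Fin 4, g ≠ (fun _ => 0) → c g = 0 := by
    intro g hg
    have h1 : ((nPauli g)ᴴ * V).trace = c g * 2 ^ n := by
      rw [← hc, trace_nPauli_sum]
    rw [nPauli_conjTranspose, htr g hg] at h1
    exact ((mul_eq_zero.mp h1.symm).resolve_right (two_pow_ne n))
  rw [← hc]
  rw [Finset.sum_eq_single (fun _ => (0 : Fin 4))]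
  · rw [nPauli_zero]
  · intro g _ hg; rw [hzero g hg, zero_smul]
  · simp

/-- If U and Ũ are distinct n-qubit Clifford unitaries (U†Ũ is not a
scalar multiple of the identity), then |Tr(U†Ũ)/2^n|² ≤ 1/2. -/
theorem entanglement_fidelity_le_half_of_distinct_cliffords (n : ℕ)
    (U Ut : Matrix (Fin n → Fin 2) (Fin n → Fin 2) ℂ)
    (hU : IsClifford U) (hUt : IsClifford Ut)
    (hdist : ∀ c : ℂ, Uᴴ * Ut ≠ c • (1 : Matrix (Fin n → Fin 2) (Fin n → Fin 2) ℂ)) :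
    ‖(Uᴴ * Ut).trace / 2 ^ n‖ ^ 2 ≤ 1 / 2 := by
  set V := Uᴴ * Ut with hVdef
  have hVc : IsClifford V := IsClifford.mul hU.adj hUt
  have hVu : Vᴴ * V = 1 := by
    have := Matrix.mem_unitaryGroup_iff'.mp hVc.1
    simpa [Matrix.star_eq_conjTranspose] using this
  have htrV : (Vᴴ * V).trace = (2:ℂ) ^ n := by
    rw [hVu, trace_one]
    simp [Fintype.card_fun]
  by_cases hcomm : ∀ f, V * nPauli f = nPauli f * V
  · obtain ⟨c, hcV⟩ := scalar_of_commutes hcomm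
    exact absurd hcV (hdist c)
  · push_neg at hcomm
    obtain ⟨f, hf⟩ := hcomm
    obtain ⟨g, s, hs, hgs⟩ := hVc.2 f
    have habs_s : ‖s‖ = 1 := by rcases hs with h | h <;> simp [h]
    have hVP : V * nPauli f = s • (nPauli g * V) := by
      calc V * nPauli f = V * nPauli f * (Vᴴ * V) := by rw [hVu]; simp
        _ = (V * nPauli f * Vᴴ) * V := by simp only [Matrix.mul_assoc]
        _ = s • (nPauli g * V) := by rw [hgs, Matrix.smul_mul]
    by_cases hgf : g = f
    · subst hgf
      have hs1 : s = -1 := by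
        rcases hs with h | h
        · exact absurd (by rw [hVP, h, one_smul]) hf
        · exact h
      have hanti : V * nPauli g = -(nPauli g * V) := by
        rw [hVP, hs1, neg_smul, one_smul]
      have hT : V.trace = 0 := by
        have h1 : (nPauli g * V * nPauli g).trace = V.trace := by
          rw [trace_mul_comm]
          calc (nPauli g * (nPauli g * V)).trace
              = ((nPauli g * nPauli g) * V).trace := by simp only [Matrix.mul_assoc]
            _ = V.trace := by rw [nPauli_mul_self]; simp
        have h2 : (nPauli g * V * nPauli g).trace = -V.trace := by
          calc (nPauli g * V * nPauli g).trace
              = (nPauli g * (V * nPauli g)).trace := by simp only [Matrix.mul_assoc]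
            _ = (nPauli g * -(nPauli g * V)).trace := by rw [hanti]
            _ = -((nPauli g * nPauli g) * V).trace := by
                rw [Matrix.mul_neg, trace_neg, Matrix.mul_assoc]
            _ = -V.trace := by rw [nPauli_mul_self]; simp
        linear_combination h1.symm.trans h2 / 2
      rw [hT]
      norm_num
    · set hidx := fun k => pMul (f k) (g k) with hhidx
      have hh0 : hidx ≠ (fun _ => 0) := by
        intro hcon
        exact hgf (funext fun k =>
          ((pMul_eq_zero_iff (f k) (g k)).mp (congrFun hcon k))).symm
      set ω := ∏ k, pPh (f k) (g k) with hω
      have habsω : ‖ω‖ = 1 := by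
        rw [hω, norm_prod]
        simp [pPh_abs]
      have hT1 : (nPauli g * (V * nPauli f)).trace = s * V.trace := by
        rw [hVP, Matrix.mul_smul, trace_smul, smul_eq_mul]
        congr 1
        calc (nPauli g * (nPauli g * V)).trace
            = ((nPauli g * nPauli g) * V).trace := by simp only [Matrix.mul_assoc]
          _ = V.trace := by rw [nPauli_mul_self]; simp
      have hT2 : (nPauli g * (V * nPauli f)).trace = ω * (nPauli hidx * V).trace := by
        rw [trace_mul_comm]
        calc ((V * nPauli f) * nPauli g).trace
            = (V * (nPauli f * nPauli g)).trace := by simp only [Matrix.mul_assoc]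
          _ = (V * (ω • nPauli hidx)).trace := by rw [nPauli_mul f g]
          _ = ω * (V * nPauli hidx).trace := by rw [Matrix.mul_smul, trace_smul, smul_eq_mul]
          _ = ω * (nPauli hidx * V).trace := by rw [trace_mul_comm]
      have habseq : ‖(nPauli hidx * V).trace‖ = ‖V.trace‖ := by
        have he := congrArg norm (hT1.symm.trans hT2)
        rw [norm_mul, norm_mul, habs_s, habsω, one_mul, one_mul] at he
        exact he.symm
      have hA1 : ((1 : Matrix (Fin n → Fin 2) (Fin n → Fin 2) ℂ)ᴴ * 1).trace = (2:ℂ) ^ n := by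
        rw [conjTranspose_one, one_mul, trace_one]
        simp [Fintype.card_fun]
      have hB1 : ((nPauli hidx)ᴴ * nPauli hidx).trace = (2:ℂ) ^ n := by simp [nPauli_orth]
      have hAB1 : ((1 : Matrix (Fin n → Fin 2) (Fin n → Fin 2) ℂ)ᴴ * nPauli hidx).trace = 0 := by
        rw [conjTranspose_one, one_mul, nPauli_trace, if_neg hh0]
      have hbes := bessel_two 1 (nPauli hidx) V hA1 hB1 hAB1 htrV
      rw [conjTranspose_one, one_mul, nPauli_conjTranspose, habseq] at hbes
      have hstep : ‖(2:ℂ) ^ n‖ = (2:ℝ) ^ n := by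
        rw [norm_pow, Complex.norm_two]
      rw [norm_div, hstep, div_pow]
      rw [div_le_div_iff₀ (by positivity) (by norm_num)]
      nlinarith [hbes]
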